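/- arXiv:1406.2233 — 3 statements merged into one kernel-verified Lean document; each statement's English description precedes it below -/
import Mathlib

section
/- For all n ≥ 0 and all z on the unit circle, |P_n(z)| ≤ 2^{(n+1)/2}, i.e., |P_n(z)|^2 ≤ 2^{n+1}, where P_n is the n-th Rudin-Shapiro polynomial. -/
open Complex Real

noncomputable def RS : ℕ → (ℂ → ℂ) × (ℂ → ℂ)
  | 0 => (fun _ => 1, fun _ => 1)
  | n + 1 =>
      (fun z => (RS n).1 z + z ^ (2 ^ n) * (RS n).2 z,
       fun z => (RS n).1 z - z ^ (2 ^ n) * (RS n).2 z)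

noncomputable def P (n : ℕ) (z : ℂ) : ℂ := (RS n).1 z

noncomputable def Q (n : ℕ) (z : ℂ) : ℂ := (RS n).2 z

/-! On the unit circle the Rudin–Shapiro recursion is a parallelogram-law step, so
`|P_n|² + |Q_n|² = 2^{n+1}` exactly; dropping `|Q_n|²` gives the bound. -/

theorem norm_add_smul_sq_add_norm_sub_smul_sq {𝕜 E : Type*} [RCLike 𝕜]
    [NormedAddCommGroup E] [InnerProductSpace 𝕜 E] {w : 𝕜} (hw : ‖w‖ = 1) (x y : E) :
    ‖x + w • y‖ ^ 2 + ‖x - w • y‖ ^ 2 = 2 * (‖x‖ ^ 2 + ‖y‖ ^ 2) := by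
  rw [parallelogram_law_with_norm 𝕜, norm_smul, hw, one_mul]

theorem P_succ (n : ℕ) (z : ℂ) : P (n + 1) z = P n z + z ^ 2 ^ n * Q n z := rfl

theorem Q_succ (n : ℕ) (z : ℂ) : Q (n + 1) z = P n z - z ^ 2 ^ n * Q n z := rfl

theorem norm_P_sq_add_norm_Q_sq {z : ℂ} (hz : ‖z‖ = 1) (n : ℕ) :
    ‖P n z‖ ^ 2 + ‖Q n z‖ ^ 2 = 2 ^ (n + 1) := by
  induction n with
  | zero => norm_num [P, Q, RS]
  | succ n ih =>
    have hw : ‖z ^ 2 ^ n‖ = 1 := by rw [norm_pow, hz, one_pow]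
    rw [P_succ, Q_succ, ← smul_eq_mul, norm_add_smul_sq_add_norm_sub_smul_sq hw, ih, ← pow_succ']

theorem rs_sup_bound (n : ℕ) (z : ℂ) (hz : ‖z‖ = 1) :
    ‖P n z‖ ^ 2 ≤ 2 ^ (n + 1) :=
  norm_P_sq_add_norm_Q_sq hz n ▸ le_add_of_nonneg_right (sq_nonneg _)
end

section
/- Let n ≥ 2 be an integer, N := 2^n, and z_j := e^{2πij/N} for j ∈ ℤ. If j is even, then P_n(z_j) = 2 P_{n-2}(z_j), and if j = 2u+1 is odd, then P_n(z_j) = (-1)^{(j-1)/2} · 2i · Q_{n-2}(z_j), where i is the imaginary unit. -/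
open Complex Real

/-! Unfolding the recursion twice gives
`P (m + 2) z = (1 + w ^ 2) * P m z + w * (1 - w ^ 2) * Q m z` with `w = z ^ 2 ^ m`.
At `z = exp (2πij / 2 ^ (m + 2))` we have `w = i ^ j`, so `w ^ 2 = (-1) ^ j`: for even `j` the
`Q`-term vanishes and the `P`-coefficient is `2`, for odd `j` it is the other way round. -/

theorem P_add_two (m : ℕ) (z : ℂ) :
    P (m + 2) z = (1 + (z ^ 2 ^ m) ^ 2) * P m z + z ^ 2 ^ m * (1 - (z ^ 2 ^ m) ^ 2) * Q m z := by
  simp only [P, Q, RS, pow_succ 2 m, pow_mul]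
  ring

theorem exp_two_pi_I_div_two_pow_pow (m : ℕ) (j : ℤ) :
    exp (2 * π * I * j / ((2 ^ (m + 2) : ℕ) : ℂ)) ^ 2 ^ m = I ^ j := by
  have hexp : (2 ^ m : ℕ) * (2 * π * I * j / ((2 ^ (m + 2) : ℕ) : ℂ)) = j * (π / 2 * I) := by
    push_cast
    field_simp
    ring
  rw [← Complex.exp_nat_mul, hexp, exp_int_mul, exp_pi_div_two_mul_I]

theorem I_zpow_sq (j : ℤ) : (I ^ j) ^ 2 = (-1) ^ j := by
  rw [← zpow_natCast, ← zpow_mul, mul_comm, zpow_mul, Nat.cast_ofNat, zpow_two, I_mul_I]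

theorem I_zpow_two_mul_add_one (u : ℤ) : I ^ (2 * u + 1) = (-1) ^ u * I := by
  rw [zpow_add₀ I_ne_zero, zpow_mul, zpow_two, I_mul_I, zpow_one]

theorem rs_at_roots_of_unity (n : ℕ) (hn : 2 ≤ n) (N : ℕ) (hN : N = 2 ^ n)
    (z : ℤ → ℂ) (hz : ∀ j : ℤ, z j = Complex.exp (2 * Real.pi * Complex.I * j / N)) :
    (∀ j : ℤ, Even j → P n (z j) = 2 * P (n - 2) (z j)) ∧
    (∀ j u : ℤ, j = 2 * u + 1 →
      P n (z j) = (-1 : ℂ) ^ u * (2 * Complex.I) * Q (n - 2) (z j)) := by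
  obtain ⟨m, rfl⟩ : ∃ m, n = m + 2 := ⟨n - 2, by omega⟩
  subst hN
  have hpow (j : ℤ) : z j ^ 2 ^ m = I ^ j := by rw [hz, exp_two_pi_I_div_two_pow_pow]
  refine ⟨fun j hj => ?_, fun j u hj => ?_⟩
  · rw [Nat.add_sub_cancel, P_add_two, hpow, I_zpow_sq, hj.neg_one_zpow]
    ring
  · have hodd : Odd j := ⟨u, hj⟩
    rw [Nat.add_sub_cancel, P_add_two, hpow, I_zpow_sq, hodd.neg_one_zpow, hj,
      I_zpow_two_mul_add_one]
    ring
end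

section
/- Let γ := sin^2(π/8), k ∈ ℕ, M > 0. Suppose S is a real trigonometric polynomial of degree at most k satisfying 0 ≤ S(t) ≤ M for all t ∈ ℝ, and suppose a ∈ ℝ satisfies S(a) ≥ (1 - γ)M. Then S(t) ≥ γM for all t ∈ [a - π/(2k), a + π/(2k)]. -/
/-!
Suppose `S(t₀) < γM` with `a < t₀ ≤ a + π/(2k)`, where `γ = sin²(π/8)`, so that
`M(1 + cos π/4)/2 = (1 - γ)M` and `M(1 - cos π/4)/2 = γM`. Put `θ = a - π/(4k)`,
`ε = (γM - S(t₀))/2 > 0`, and compare `S` with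
`C(t) = M(1 + cos k(t - θ))/2 + ε cos(k(t - θ) + 3π/8)`. At the phases
`k(t - θ) = 0, π/4, k(t₀ - θ), π, 2π, …, (2k - 1)π` the difference `C - S` alternates in
sign: at multiples of `π` because `0 ≤ S ≤ M`, at `π/4` because `S(a) ≥ (1 - γ)M`, and at `t₀`
because `k(t₀ - θ) ∈ (π/4, 3π/4]`. These are `2k + 2` points in less than one period, so the
trigonometric polynomial `C - S` of degree `k` has `2k + 1` zeros in a period. Since
`z ^ k (C - S)` is a polynomial of degree `2k` in `z = exp(it)`, that forces `C = S`, which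
contradicts the signs. The case `t < a` follows by reflection in `a`.
-/

open Real

/-- A real trigonometric polynomial of degree at most `k`. -/
def IsTrigPoly (k : ℕ) (S : ℝ → ℝ) : Prop :=
  ∃ a b : ℕ → ℝ, ∀ t : ℝ,
    S t = a 0 + ∑ j ∈ Finset.Icc 1 k, (a j * Real.cos (j * t) + b j * Real.sin (j * t))

open Finset Set Polynomial Complex

theorem isTrigPoly_const (k : ℕ) (c : ℝ) : IsTrigPoly k (fun _ => c) :=
  ⟨Pi.single 0 c, 0, fun t => by
    rw [sum_eq_zero fun j hj => by simp [Nat.one_le_iff_ne_zero.1 (Finset.mem_Icc.1 hj).1]]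
    simp⟩

theorem isTrigPoly_cos_nat_mul_add {k n : ℕ} (hn : n ≤ k) (c : ℝ) :
    IsTrigPoly k (fun t => Real.cos (n * t + c)) := by
  rcases Nat.eq_zero_or_pos n with rfl | hn0
  · simpa using isTrigPoly_const k (Real.cos c)
  refine ⟨Pi.single n (Real.cos c), Pi.single n (-Real.sin c), fun t => ?_⟩
  rw [sum_eq_single_of_mem n (Finset.mem_Icc.2 ⟨hn0, hn⟩) fun j _ hj => by simp [hj]]
  simp [hn0.ne, Real.cos_add]
  ring

namespace IsTrigPoly

variable {k : ℕ} {S T : ℝ → ℝ}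

theorem add (hS : IsTrigPoly k S) (hT : IsTrigPoly k T) : IsTrigPoly k (fun t => S t + T t) := by
  obtain ⟨a, b, hS⟩ := hS
  obtain ⟨c, d, hT⟩ := hT
  refine ⟨a + c, b + d, fun t => ?_⟩
  simp only [hS, hT, Pi.add_apply, add_add_add_comm, ← sum_add_distrib]
  exact congrArg _ (sum_congr rfl fun j _ => by ring)

theorem sub (hS : IsTrigPoly k S) (hT : IsTrigPoly k T) : IsTrigPoly k (fun t => S t - T t) := by
  obtain ⟨a, b, hS⟩ := hS
  obtain ⟨c, d, hT⟩ := hT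
  refine ⟨a - c, b - d, fun t => ?_⟩
  simp only [hS, hT, Pi.sub_apply, add_sub_add_comm, ← sum_sub_distrib]
  exact congrArg _ (sum_congr rfl fun j _ => by ring)

theorem const_mul (hS : IsTrigPoly k S) (c : ℝ) : IsTrigPoly k (fun t => c * S t) := by
  obtain ⟨a, b, hS⟩ := hS
  refine ⟨c • a, c • b, fun t => ?_⟩
  simp only [hS, Pi.smul_apply, smul_eq_mul, mul_add, mul_sum, mul_assoc]

theorem comp_const_sub (hS : IsTrigPoly k S) (c : ℝ) : IsTrigPoly k (fun t => S (c - t)) := by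
  obtain ⟨a, b, hS⟩ := hS
  refine ⟨fun j => a j * Real.cos (j * c) + b j * Real.sin (j * c),
    fun j => a j * Real.sin (j * c) - b j * Real.cos (j * c), fun t => ?_⟩
  simp only [hS, CharP.cast_eq_zero, zero_mul, Real.cos_zero, Real.sin_zero, mul_one, mul_zero,
    add_zero]
  refine congrArg _ (sum_congr rfl fun j _ => ?_)
  rw [mul_sub, Real.cos_sub, Real.sin_sub]
  ring

protected theorem continuous (hS : IsTrigPoly k S) : Continuous S := by
  obtain ⟨a, b, hS⟩ := hS
  rw [funext hS]
  fun_prop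

end IsTrigPoly

theorem IsTrigPoly.exists_polynomial {k : ℕ} {S : ℝ → ℝ} (hS : IsTrigPoly k S) :
    ∃ P : ℂ[X], P.natDegree ≤ 2 * k ∧
      ∀ t : ℝ, P.eval (cexp (t * I)) = cexp (t * I) ^ k * S t := by
  obtain ⟨a, b, hS⟩ := hS
  refine ⟨C (a 0 : ℂ) * X ^ k + ∑ j ∈ Finset.Icc 1 k,
      (C ((a j - b j * I) / 2) * X ^ (k + j) + C ((a j + b j * I) / 2) * X ^ (k - j)), ?_, ?_⟩
  · refine natDegree_add_le_of_degree_le ((natDegree_C_mul_X_pow_le _ _).trans (by omega))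
      (natDegree_sum_le_of_forall_le _ _ fun j hj => natDegree_add_le_of_degree_le
        ((natDegree_C_mul_X_pow_le _ _).trans ?_) ((natDegree_C_mul_X_pow_le _ _).trans ?_)) <;>
    simp only [Finset.mem_Icc] at hj <;> omega
  · intro t
    set z := cexp (t * I)
    have hz : z ≠ 0 := Complex.exp_ne_zero _
    have hpow (j : ℕ) : z ^ j = cexp ((j * t : ℝ) * I) := by
      rw [← Complex.exp_nat_mul]; push_cast; ring_nf
    simp only [eval_add, eval_mul, eval_C, eval_pow, eval_X, eval_finsetSum, hS, ofReal_add,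
      ofReal_sum, mul_add, mul_sum]
    congr 1
    · ring
    refine sum_congr rfl fun j hj => ?_
    rw [pow_add, pow_sub₀ _ hz (Finset.mem_Icc.1 hj).2, hpow j, ← Complex.exp_neg]
    have hcos := Complex.two_cos ((j * t : ℝ))
    have hsin := Complex.two_sin ((j * t : ℝ))
    push_cast at hcos hsin ⊢
    rw [neg_mul] at hcos hsin
    linear_combination -(z ^ k * a j / 2) * hcos - (z ^ k * b j / 2) * hsin

theorem IsTrigPoly.card_zeros_le {k : ℕ} {D : ℝ → ℝ} (hD : IsTrigPoly k D) {t₀ : ℝ}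
    (ht₀ : D t₀ ≠ 0) {x y : ℝ} (hxy : y - x ≤ 2 * π) {Z : Finset ℝ}
    (hZ : ↑Z ⊆ Ico x y) (hzero : ∀ z ∈ Z, D z = 0) : Z.card ≤ 2 * k := by
  obtain ⟨P, hdeg, hP⟩ := hD.exists_polynomial
  have hP0 : P ≠ 0 := by
    rintro rfl
    simpa [Complex.exp_ne_zero, ht₀] using hP t₀
  have hinj : InjOn (fun t : ℝ => cexp (t * I)) Z :=
    (Subtype.val_injective.comp_injOn (Circle.exp_injOn_Ico hxy)).mono hZ
  calc Z.card = (Z.image fun t : ℝ => cexp (t * I)).card := (card_image_of_injOn hinj).symm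
    _ ≤ P.natDegree := card_le_degree_of_subset_roots fun w hw => by
        obtain ⟨z, hz, rfl⟩ := Finset.mem_image.1 hw
        rw [mem_roots hP0, IsRoot, hP, hzero z hz, ofReal_zero, mul_zero]
    _ ≤ 2 * k := hdeg

theorem exists_zeros_of_alternating {f : ℝ → ℝ} (hf : Continuous f) {p : ℕ → ℝ}
    (hp : StrictMono p) {n : ℕ} (hsign : ∀ j ≤ n, 0 < (-1) ^ j * f (p j)) :
    ∃ Z : Finset ℝ, Z.card = n ∧ ↑Z ⊆ Ioo (p 0) (p n) ∧ ∀ z ∈ Z, f z = 0 := by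
  have hzero (j : Fin n) : ∃ z ∈ Ioo (p j) (p (j + 1)), f z = 0 := by
    have hpos := hsign j j.2.le
    have hneg := hsign (j + 1) j.2
    rw [pow_succ, mul_neg_one, neg_mul, neg_pos] at hneg
    obtain ⟨z, hz, hfz⟩ := intermediate_value_Ioo' (hp (Nat.lt_succ_self j)).le
      (continuous_const.mul hf).continuousOn ⟨hneg, hpos⟩
    exact ⟨z, hz, (mul_eq_zero.1 hfz).resolve_left (pow_ne_zero _ (by norm_num))⟩
  choose z hz hfz using hzero
  have hmono : StrictMono z := fun i j hij =>
    ((hz i).2.trans_le (hp.monotone (Nat.succ_le_of_lt hij))).trans (hz j).1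
  refine ⟨univ.image z, by rw [Finset.card_image_of_injective _ hmono.injective, card_univ,
    Fintype.card_fin], ?_, ?_⟩
  · intro w hw
    obtain ⟨j, -, rfl⟩ := Finset.mem_image.1 (Finset.mem_coe.1 hw)
    exact ⟨(hp.monotone (Nat.zero_le j)).trans_lt (hz j).1,
      (hz j).2.trans_le (hp.monotone j.2)⟩
  · intro w hw
    obtain ⟨j, -, rfl⟩ := Finset.mem_image.1 hw
    exact hfz j

theorem IsTrigPoly.le_of_alternating {k : ℕ} {D : ℝ → ℝ} (hD : IsTrigPoly k D)
    {p : ℕ → ℝ} (hp : StrictMono p) {n : ℕ} (hperiod : p n ≤ p 0 + 2 * π)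
    (hsign : ∀ j ≤ n, 0 < (-1) ^ j * D (p j)) : n ≤ 2 * k := by
  obtain ⟨Z, hcard, hZ, hzero⟩ := exists_zeros_of_alternating hD.continuous hp hsign
  have hD0 : D (p 0) ≠ 0 := by simpa using (hsign 0 (Nat.zero_le n)).ne'
  exact hcard ▸ hD.card_zeros_le hD0 (by linarith) (hZ.trans Ioo_subset_Ico_self) hzero

theorem cos_pi_div_four_eq_one_sub_two_mul_sin_sq :
    Real.cos (π / 4) = 1 - 2 * Real.sin (π / 8) ^ 2 := by
  rw [Real.sin_sq_eq_half_sub, show 2 * (π / 8) = π / 4 by ring]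
  ring

-- The shift `3π/8` is chosen so that `cos (3π/8) > 0` while `cos (π/4 + 3π/8) < 0`.
noncomputable def comparison (M ε x : ℝ) : ℝ :=
  M / 2 + M / 2 * Real.cos x + ε * Real.cos (x + 3 * π / 8)

section comparison

variable {M ε s : ℝ}

theorem neg_one_pow_mul_comparison_nat_mul_pi_sub_pos (hε : 0 < ε) (hs : 0 ≤ s ∧ s ≤ M)
    (n : ℕ) : 0 < (-1) ^ n * (comparison M ε (n * π) - s) := by
  have hc : 0 < ε * Real.cos (3 * π / 8) :=
    mul_pos hε (Real.cos_pos_of_mem_Ioo ⟨by linarith [pi_pos], by linarith [pi_pos]⟩)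
  rw [comparison, Real.cos_nat_mul_pi, add_comm _ (3 * π / 8), Real.cos_add_nat_mul_pi]
  rcases neg_one_pow_eq_or ℝ n with h | h <;> rw [h] <;> linarith

theorem comparison_pi_div_four_lt (hε : 0 < ε) (hs : (1 - Real.sin (π / 8) ^ 2) * M ≤ s) :
    comparison M ε (π / 4) < s := by
  have hc : ε * Real.cos (5 * π / 8) < 0 :=
    mul_neg_of_pos_of_neg hε (Real.cos_neg_of_pi_div_two_lt_of_lt (by linarith [pi_pos])
      (by linarith [pi_pos]))
  rw [comparison, cos_pi_div_four_eq_one_sub_two_mul_sin_sq,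
    show π / 4 + 3 * π / 8 = 5 * π / 8 by ring]
  linarith

theorem sin_sq_pi_div_eight_mul_sub_le_comparison (hM : 0 ≤ M) (hε : 0 ≤ ε) {x : ℝ}
    (hx : x ∈ Icc (π / 4) (3 * π / 4)) :
    Real.sin (π / 8) ^ 2 * M - ε ≤ comparison M ε x := by
  have hcos : Real.cos (3 * π / 4) ≤ Real.cos x :=
    Real.cos_le_cos_of_nonneg_of_le_pi (by linarith [pi_pos, hx.1]) (by linarith [pi_pos]) hx.2
  rw [show 3 * π / 4 = π - π / 4 by ring, Real.cos_pi_sub,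
    cos_pi_div_four_eq_one_sub_two_mul_sin_sq] at hcos
  have := mul_le_mul_of_nonneg_left hcos (by positivity : 0 ≤ M / 2)
  have := mul_le_mul_of_nonneg_left (Real.neg_one_le_cos (x + 3 * π / 8)) hε
  rw [comparison]
  linarith

end comparison

noncomputable def alternationPhase (x₀ : ℝ) : ℕ → ℝ
  | 0 => 0
  | 1 => π / 4
  | 2 => x₀
  | j + 3 => (j + 1) * π

theorem strictMono_alternationPhase {x₀ : ℝ} (hx₀ : x₀ ∈ Ioo (π / 4) π) :
    StrictMono (alternationPhase x₀) :=
  strictMono_nat_of_lt_succ fun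
    | 0 => by simp [alternationPhase, pi_pos]
    | 1 => hx₀.1
    | 2 => by simpa [alternationPhase] using hx₀.2
    | j + 3 => by simp only [alternationPhase]; push_cast; linarith [pi_pos]

theorem neg_one_pow_mul_comparison_alternationPhase_sub_pos {M ε x₀ : ℝ} {s : ℕ → ℝ}
    (hε : 0 < ε) (hs : ∀ j, 0 ≤ s j ∧ s j ≤ M)
    (hs₁ : (1 - Real.sin (π / 8) ^ 2) * M ≤ s 1) (hs₂ : s 2 < Real.sin (π / 8) ^ 2 * M - ε)
    (hx₀ : x₀ ∈ Icc (π / 4) (3 * π / 4)) :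
    ∀ j, 0 < (-1) ^ j * (comparison M ε (alternationPhase x₀ j) - s j)
  | 0 => by
    simpa [alternationPhase] using neg_one_pow_mul_comparison_nat_mul_pi_sub_pos hε (hs 0) 0
  | 1 => by simpa [alternationPhase] using comparison_pi_div_four_lt hε hs₁
  | 2 => by
    simpa [alternationPhase] using
      hs₂.trans_le <|
        sin_sq_pi_div_eight_mul_sub_le_comparison ((hs 0).1.trans (hs 0).2) hε.le hx₀
  | j + 3 => by
    simpa [alternationPhase, pow_succ] using
      neg_one_pow_mul_comparison_nat_mul_pi_sub_pos hε (hs (j + 3)) (j + 1)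

theorem IsTrigPoly.sin_sq_pi_div_eight_mul_le_of_mem_Ioc {k : ℕ} {M : ℝ} {S : ℝ → ℝ}
    (hS : IsTrigPoly k S) (hbound : ∀ t, 0 ≤ S t ∧ S t ≤ M) {a t₀ : ℝ}
    (ha : (1 - Real.sin (π / 8) ^ 2) * M ≤ S a) (ht₀ : t₀ ∈ Ioc a (a + π / (2 * k))) :
    Real.sin (π / 8) ^ 2 * M ≤ S t₀ := by
  have hk : (0 : ℝ) < k := Nat.cast_pos.2 <| Nat.pos_of_ne_zero <| by
    rintro rfl
    simp only [CharP.cast_eq_zero, mul_zero, div_zero, add_zero] at ht₀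
    exact ht₀.1.not_ge ht₀.2
  by_contra! hlt
  set ε := (Real.sin (π / 8) ^ 2 * M - S t₀) / 2 with hε
  set θ := a - π / (4 * k) with hθ
  set x₀ := k * (t₀ - θ)
  set D := fun t => comparison M ε (k * (t - θ)) - S t
  set p := fun j => θ + alternationPhase x₀ j / k
  have hD : IsTrigPoly k D := by
    convert (((isTrigPoly_const k (M / 2)).add
      ((isTrigPoly_cos_nat_mul_add le_rfl (-(k * θ))).const_mul (M / 2))).add
      ((isTrigPoly_cos_nat_mul_add le_rfl (3 * π / 8 - k * θ)).const_mul ε)).sub hS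
      using 2 with t
    simp only [D, comparison]
    ring_nf
  have hx₀ : x₀ ∈ Ioc (π / 4) (3 * π / 4) := by
    have hkθ : k * (a - θ) = π / 4 := by rw [hθ]; field_simp; ring
    have : k * (t₀ - a) ≤ π / 2 := by
      rw [← le_div_iff₀' hk, div_div]; linarith [ht₀.2]
    constructor <;> nlinarith [ht₀.1]
  have hp : StrictMono p := fun i j hij => by
    simpa [p] using div_lt_div_of_pos_right (strictMono_alternationPhase
      ⟨hx₀.1, hx₀.2.trans_lt (by linarith [pi_pos])⟩ hij) hk
  have hperiod : p (2 * k + 1) ≤ p 0 + 2 * π := by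
    obtain ⟨m, rfl⟩ := Nat.exists_eq_add_one_of_ne_zero (Nat.cast_pos.1 hk).ne'
    have : alternationPhase x₀ (2 * (m + 1) + 1) / (m + 1 : ℕ) ≤ 2 * π := by
      rw [show alternationPhase x₀ (2 * (m + 1) + 1) = ((2 * m : ℕ) + 1) * π from rfl,
        div_le_iff₀ hk]
      push_cast
      nlinarith [pi_pos]
    simp only [p, show alternationPhase x₀ 0 = 0 from rfl, zero_div, add_zero]
    linarith
  have hsign (j : ℕ) : 0 < (-1) ^ j * D (p j) := by
    have hphase (i : ℕ) : k * (p i - θ) = alternationPhase x₀ i := by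
      simp only [p]; field_simp; ring
    have hp₁ : p 1 = a := by
      simp only [p, alternationPhase, hθ]; field_simp; ring
    have hp₂ : p 2 = t₀ := by
      simp only [p, alternationPhase, x₀]; field_simp; ring
    simpa [D, hphase] using neg_one_pow_mul_comparison_alternationPhase_sub_pos
      (s := fun j => S (p j)) (by linarith) (fun j => hbound (p j)) (hp₁ ▸ ha)
      (by rw [hp₂]; linarith) (Ioc_subset_Icc_self hx₀) j
  have := hD.le_of_alternating hp hperiod fun j _ => hsign j
  omega

theorem trig_lower_bound_general (k : ℕ) (M : ℝ) (S : ℝ → ℝ)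
    (hS : IsTrigPoly k S) (hbound : ∀ t, 0 ≤ S t ∧ S t ≤ M) (a : ℝ)
    (ha : S a ≥ (1 - Real.sin (Real.pi / 8) ^ 2) * M) :
    ∀ t ∈ Set.Icc (a - Real.pi / (2 * k)) (a + Real.pi / (2 * k)),
      S t ≥ Real.sin (Real.pi / 8) ^ 2 * M := by
  rintro t ⟨ht₁, ht₂⟩
  rcases lt_trichotomy t a with hta | rfl | hat
  · have := (hS.comp_const_sub (2 * a)).sin_sq_pi_div_eight_mul_le_of_mem_Ioc
      (fun _ => hbound _) (by rwa [two_mul, add_sub_cancel_right]) (t₀ := 2 * a - t)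
      ⟨by linarith, by linarith⟩
    rwa [sub_sub_cancel] at this
  · have := mul_nonneg (Real.cos_nonneg_of_neg_pi_div_two_le_of_le (by linarith [pi_pos])
      (by linarith [pi_pos]) : 0 ≤ Real.cos (π / 4)) ((hbound t).1.trans (hbound t).2)
    rw [cos_pi_div_four_eq_one_sub_two_mul_sin_sq] at this
    linarith
  · exact hS.sin_sq_pi_div_eight_mul_le_of_mem_Ioc hbound ha ⟨hat, ht₂⟩

theorem trig_lower_bound (k : ℕ) (M : ℝ) (hM : 0 < M) (S : ℝ → ℝ)
    (hS : IsTrigPoly k S) (hbound : ∀ t, 0 ≤ S t ∧ S t ≤ M) (a : ℝ)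
    (ha : S a ≥ (1 - Real.sin (Real.pi / 8) ^ 2) * M) :
    ∀ t ∈ Set.Icc (a - Real.pi / (2 * k)) (a + Real.pi / (2 * k)),
      S t ≥ Real.sin (Real.pi / 8) ^ 2 * M :=
  trig_lower_bound_general k M S hS hbound a ha
end
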